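/- arXiv:2408.17234 — 2 statements merged into one kernel-verified Lean document; each statement's English description precedes it below -/
import Mathlib

section
/- Every mutual-visibility set of ST_3^2 has at most 6 vertices, i.e., μ(ST_3^2) ≤ 6. -/
namespace SierpinskiTriangle

/-- The unit upward triangle ("cell") with lower-left corner `c` is present in the
level-`n` Sierpiński triangle (Pascal-mod-2 characterization). -/
def Cell (n : ℕ) (c : ℕ × ℕ) : Prop :=
  Nat.land c.1 c.2 = 0 ∧ c.1 + c.2 < 2 ^ n

/-- The three corner points of the cell with lower-left corner `c`. -/
def cellCorners (c : ℕ × ℕ) : Set (ℕ × ℕ) :=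
  {c, (c.1 + 1, c.2), (c.1, c.2 + 1)}

/-- The Sierpiński triangle graph `ST₃ⁿ`, realized on the ambient type `ℕ × ℕ`
(points that are not vertices of `ST₃ⁿ` are isolated). Two distinct points are
adjacent iff they are corners of a common present cell. -/
def graph (n : ℕ) : SimpleGraph (ℕ × ℕ) where
  Adj u v := u ≠ v ∧ ∃ c, Cell n c ∧ u ∈ cellCorners c ∧ v ∈ cellCorners c
  symm := ⟨fun u v ⟨huv, c, hc, hu, hv⟩ => ⟨huv.symm, c, hc, hv, hu⟩⟩
  loopless := ⟨fun u h => h.1 rfl⟩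

/-- The vertex set of `ST₃ⁿ`. -/
def verts (n : ℕ) : Set (ℕ × ℕ) := {v | ∃ c, Cell n c ∧ v ∈ cellCorners c}

/-- The three extreme vertices of `ST₃ⁿ`. -/
def extreme (n : ℕ) : Set (ℕ × ℕ) := {(0, 0), (2 ^ n, 0), (0, 2 ^ n)}

/-- `IsCopy n m o` : the translate by `o` of `ST₃ᵐ` is one of the canonical copies
of `ST₃ᵐ` inside `ST₃ⁿ` arising from the recursive construction. -/
def IsCopy (n m : ℕ) (o : ℕ × ℕ) : Prop :=
  ∃ i j : ℕ, o = (i * 2 ^ m, j * 2 ^ m) ∧ Nat.land i j = 0 ∧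
    i * 2 ^ m + j * 2 ^ m + 2 ^ m ≤ 2 ^ n

/-- The vertex set of the copy of `ST₃ᵐ` at offset `o`. -/
def copyVerts (m : ℕ) (o : ℕ × ℕ) : Set (ℕ × ℕ) :=
  (fun v : ℕ × ℕ => (o.1 + v.1, o.2 + v.2)) '' verts m

/-- The extreme vertices of the copy of `ST₃ᵐ` at offset `o`. -/
def copyExtreme (m : ℕ) (o : ℕ × ℕ) : Set (ℕ × ℕ) :=
  {(o.1, o.2), (o.1 + 2 ^ m, o.2), (o.1, o.2 + 2 ^ m)}

/-- A walk is a shortest (geodesic) walk if its length equals the graph distance. -/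
def IsShortest {V : Type*} (G : SimpleGraph V) {u v : V} (w : G.Walk u v) : Prop :=
  w.length = G.dist u v

/-- `u` and `v` are `M`-visible: some shortest `u,v`-path avoids `M \ {u, v}`. -/
def Visible {V : Type*} (G : SimpleGraph V) (M : Set V) (u v : V) : Prop :=
  ∃ w : G.Walk u v, IsShortest G w ∧ ∀ x ∈ w.support, x ∈ M → x = u ∨ x = v

/-- The interval `I(u,v)`: the set of vertices lying on some shortest `u,v`-path. -/
def interval {V : Type*} (G : SimpleGraph V) (u v : V) : Set V :=
  {x | ∃ w : G.Walk u v, IsShortest G w ∧ x ∈ w.support}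

/-- `M` is a mutual-visibility set of `ST₃ⁿ`. -/
def IsMutualVisSet (n : ℕ) (M : Set (ℕ × ℕ)) : Prop :=
  M ⊆ verts n ∧ ∀ u ∈ M, ∀ v ∈ M, Visible (graph n) M u v

/-- `M` is a total mutual-visibility set of `ST₃ⁿ`. -/
def IsTotalMutualVisSet (n : ℕ) (M : Set (ℕ × ℕ)) : Prop :=
  M ⊆ verts n ∧ ∀ u ∈ verts n, ∀ v ∈ verts n, Visible (graph n) M u v

/-- `M` is an outer mutual-visibility set of `ST₃ⁿ`. -/
def IsOuterMutualVisSet (n : ℕ) (M : Set (ℕ × ℕ)) : Prop :=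
  IsMutualVisSet n M ∧ ∀ u ∈ M, ∀ v ∈ verts n \ M, Visible (graph n) M u v

/-- `M` is a dual mutual-visibility set of `ST₃ⁿ`. -/
def IsDualMutualVisSet (n : ℕ) (M : Set (ℕ × ℕ)) : Prop :=
  IsMutualVisSet n M ∧ ∀ u ∈ verts n \ M, ∀ v ∈ verts n \ M, Visible (graph n) M u v

/-- `M` is a general position set of `ST₃ⁿ`. -/
def IsGenPosSet (n : ℕ) (M : Set (ℕ × ℕ)) : Prop :=
  M ⊆ verts n ∧ ∀ u ∈ M, ∀ v ∈ M, ∀ w ∈ M, u ≠ v → u ≠ w → v ≠ w →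
    (graph n).dist u v ≠ (graph n).dist u w + (graph n).dist w v

/-- The proper vertices of the copy of `ST₃²` at offset `o` inside `ST₃ⁿ`: the vertices
of the copy lying on no shortest path between two of its extreme vertices. -/
def properVerts (n : ℕ) (o : ℕ × ℕ) : Set (ℕ × ℕ) :=
  copyVerts 2 o \
    (interval (graph n) (o.1, o.2) (o.1 + 4, o.2) ∪
     interval (graph n) (o.1, o.2) (o.1, o.2 + 4) ∪
     interval (graph n) (o.1 + 4, o.2) (o.1, o.2 + 4))

/-!
A shortest `u,v`-path passes through every layer `{x ∈ I(u,v) | d(u,x) = k}` with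
`0 < k < d(u,v)`, so if a mutual-visibility set contains `u` and `v`, none of these layers lies
inside it. Every 7-vertex set of `ST₃²` contains a pair `u, v` together with a whole layer
between them; this is checked exhaustively over the `C(15,7)` vertex sets, using a table of
the distances of `ST₃²` that is certified by a `1`-Lipschitz potential argument.
-/

section Metric

variable {V : Type*} {G : SimpleGraph V}

theorem le_add_length_of_lipschitz {f : V → ℕ} (hf : ∀ x y, G.Adj x y → f y ≤ f x + 1)
    {a b : V} (p : G.Walk a b) : f b ≤ f a + p.length := by
  induction p with
  | nil => simp
  | cons h _ ih =>
    have := hf _ _ h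
    simp only [SimpleGraph.Walk.length_cons]
    omega

theorem exists_walk_length_eq_of_exists_pred {S : Set V} {u : V} {f : V → ℕ} (hu : f u = 0)
    (hpred : ∀ v ∈ S, v ≠ u → ∃ w ∈ S, G.Adj w v ∧ f w + 1 = f v) :
    ∀ v ∈ S, ∃ p : G.Walk u v, p.length = f v := by
  suffices ∀ n, ∀ v ∈ S, f v = n → ∃ p : G.Walk u v, p.length = f v from
    fun v hv => this _ v hv rfl
  intro n
  induction n with
  | zero =>
    intro v hv hfv
    by_cases hvu : v = u
    · subst hvu
      exact ⟨.nil, hu.symm⟩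
    · obtain ⟨w, -, -, hw⟩ := hpred v hv hvu
      omega
  | succ n ih =>
    intro v hv hfv
    have hvu : v ≠ u := by rintro rfl; omega
    obtain ⟨w, hwS, hwv, hw⟩ := hpred v hv hvu
    obtain ⟨p, hp⟩ := ih w hwS (by omega)
    exact ⟨p.concat hwv, by simp [hp, hw]⟩

theorem dist_eq_of_lipschitz_of_exists_pred {S : Set V} {u : V} {f : V → ℕ} (hu : f u = 0)
    (hf : ∀ x y, G.Adj x y → f y ≤ f x + 1)
    (hpred : ∀ v ∈ S, v ≠ u → ∃ w ∈ S, G.Adj w v ∧ f w + 1 = f v) {v : V} (hv : v ∈ S) :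
    G.dist u v = f v := by
  obtain ⟨p, hp⟩ := exists_walk_length_eq_of_exists_pred hu hpred v hv
  obtain ⟨q, hq⟩ := p.reachable.exists_walk_length_eq_dist
  have := le_add_length_of_lipschitz hf q
  have := SimpleGraph.dist_le p
  omega

theorem Visible.exists_notMem_of_lt_dist {M : Set V} {u v : V} (h : Visible G M u v) {k : ℕ}
    (hk : 0 < k) (hkd : k < G.dist u v) :
    ∃ x, G.dist u x = k ∧ G.dist x v = G.dist u v - k ∧ x ∉ M := by
  obtain ⟨w, hw, hwM⟩ := h
  have hw : w.length = G.dist u v := hw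
  have hux_le : G.dist u (w.getVert k) ≤ k := (SimpleGraph.dist_le (w.take k)).trans (by simp)
  have hxv_le : G.dist (w.getVert k) v ≤ G.dist u v - k :=
    (SimpleGraph.dist_le (w.drop k)).trans (by simp [hw])
  have htri := (w.take k).reachable.dist_triangle_left v
  have hux : G.dist u (w.getVert k) = k := by omega
  have hxv : G.dist (w.getVert k) v = G.dist u v - k := by omega
  refine ⟨w.getVert k, hux, hxv, fun hM => ?_⟩
  rcases hwM _ (w.getVert_mem_support k) hM with h | h
  · rw [h, SimpleGraph.dist_self] at hux
    omega
  · rw [h, SimpleGraph.dist_self] at hxv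
    omega

end Metric

theorem ncard_le_length_filter {α : Type*} [DecidableEq α] {s : Set α} [DecidablePred (· ∈ s)]
    {l : List α} (hs : s ⊆ {x | x ∈ l}) : s.ncard ≤ (l.filter (· ∈ s)).length := by
  have : s = ↑(l.filter (· ∈ s)).toFinset := by
    ext x
    simpa using fun hx => hs hx
  calc s.ncard = (l.filter (· ∈ s)).toFinset.card := by rw [← Set.ncard_coe_finset, ← this]
    _ ≤ (l.filter (· ∈ s)).length := List.toFinset_card_le _

instance (n : ℕ) : DecidablePred (Cell n) := fun c => by
  unfold Cell; infer_instance

def cellList : List (ℕ × ℕ) := (List.range 4 ×ˢ List.range 4).filter (Cell 2)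

theorem cell_two_iff {c : ℕ × ℕ} : Cell 2 c ↔ c ∈ cellList := by
  obtain ⟨a, b⟩ := c
  simp only [cellList, List.mem_filter, List.mem_product, List.mem_range, decide_eq_true_eq]
  refine ⟨fun h => ⟨?_, h⟩, And.right⟩
  have := h.2
  norm_num at this
  omega

def cornerList (c : ℕ × ℕ) : List (ℕ × ℕ) := [c, (c.1 + 1, c.2), (c.1, c.2 + 1)]

theorem graph_two_adj_iff {u v : ℕ × ℕ} :
    (graph 2).Adj u v ↔ u ≠ v ∧ ∃ c ∈ cellList, u ∈ cornerList c ∧ v ∈ cornerList c := by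
  simp only [graph, cell_two_iff, cellCorners, cornerList, List.mem_cons, List.not_mem_nil,
    Set.mem_insert_iff, Set.mem_singleton_iff, or_false]

instance : DecidableRel (graph 2).Adj := fun _ _ => decidable_of_iff _ graph_two_adj_iff.symm

def vertexList : List (ℕ × ℕ) :=
  [(0, 0), (0, 1), (0, 2), (0, 3), (0, 4), (1, 0), (1, 1), (1, 2), (1, 3), (2, 0), (2, 1), (2, 2),
    (3, 0), (3, 1), (4, 0)]

theorem verts_two_subset_vertexList : verts 2 ⊆ {x | x ∈ vertexList} := by
  have key : ∀ c ∈ cellList, ∀ x ∈ cornerList c, x ∈ vertexList := by decide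
  rintro x ⟨c, hc, hx⟩
  refine key c (cell_two_iff.1 hc) x ?_
  simpa [cellCorners, cornerList] using hx

theorem mem_vertexList_of_adj {x y : ℕ × ℕ} (h : (graph 2).Adj x y) : x ∈ vertexList := by
  obtain ⟨-, c, hc, hx, -⟩ := h
  exact verts_two_subset_vertexList ⟨c, hc, hx⟩

/-- Entry `(i, j)` is the distance in `ST₃²` between the `i`-th and `j`-th vertices of
`vertexList`. -/
def distTable : List (List ℕ) :=
  [[0, 1, 2, 3, 4, 1, 2, 3, 4, 2, 3, 4, 3, 4, 4],
   [1, 0, 1, 2, 3, 1, 1, 2, 3, 2, 3, 3, 3, 4, 4],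
   [2, 1, 0, 1, 2, 2, 1, 1, 2, 2, 3, 2, 3, 3, 4],
   [3, 2, 1, 0, 1, 3, 2, 1, 1, 3, 3, 2, 4, 3, 4],
   [4, 3, 2, 1, 0, 4, 3, 2, 1, 4, 3, 2, 4, 3, 4],
   [1, 1, 2, 3, 4, 0, 1, 3, 4, 1, 2, 3, 2, 3, 3],
   [2, 1, 1, 2, 3, 1, 0, 2, 3, 1, 2, 3, 2, 3, 3],
   [3, 2, 1, 1, 2, 3, 2, 0, 1, 3, 2, 1, 3, 2, 3],
   [4, 3, 2, 1, 1, 4, 3, 1, 0, 3, 2, 1, 3, 2, 3],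
   [2, 2, 2, 3, 4, 1, 1, 3, 3, 0, 1, 2, 1, 2, 2],
   [3, 3, 3, 3, 3, 2, 2, 2, 2, 1, 0, 1, 1, 1, 2],
   [4, 3, 2, 2, 2, 3, 3, 1, 1, 2, 1, 0, 2, 1, 2],
   [3, 3, 3, 4, 4, 2, 2, 3, 3, 1, 1, 2, 0, 1, 1],
   [4, 4, 3, 3, 3, 3, 3, 2, 2, 2, 1, 1, 1, 0, 1],
   [4, 4, 4, 4, 4, 3, 3, 3, 3, 2, 2, 2, 1, 1, 0]]

def tableDist (u v : ℕ × ℕ) : ℕ :=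
  (distTable.getD (vertexList.idxOf u) []).getD (vertexList.idxOf v) 0

theorem dist_graph_two {u v : ℕ × ℕ} (hu : u ∈ vertexList) (hv : v ∈ vertexList) :
    (graph 2).dist u v = tableDist u v := by
  have hzero : ∀ u ∈ vertexList, tableDist u u = 0 := by decide +kernel
  have hlip : ∀ u ∈ vertexList, ∀ x ∈ vertexList, ∀ y ∈ vertexList,
      (graph 2).Adj x y → tableDist u y ≤ tableDist u x + 1 := by decide +kernel
  have hpred : ∀ u ∈ vertexList, ∀ v ∈ vertexList, v ≠ u →
      ∃ w ∈ vertexList, (graph 2).Adj w v ∧ tableDist u w + 1 = tableDist u v := by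
    decide +kernel
  exact dist_eq_of_lipschitz_of_exists_pred (S := {x | x ∈ vertexList}) (hzero u hu)
    (fun x y h => hlip u hu x (mem_vertexList_of_adj h) y (mem_vertexList_of_adj h.symm) h)
    (hpred u hu) hv

theorem mem_vertexList_of_dist_ne_zero {u x : ℕ × ℕ} (h : (graph 2).dist u x ≠ 0) :
    x ∈ vertexList := by
  obtain ⟨hne, ⟨p⟩⟩ := SimpleGraph.dist_ne_zero_iff_ne_and_reachable.1 h
  exact mem_vertexList_of_adj (p.adj_penultimate (SimpleGraph.Walk.not_nil_of_ne hne)).symm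

def layer (u v : ℕ × ℕ) (k : ℕ) : List (ℕ × ℕ) :=
  vertexList.filter fun x => tableDist u x = k ∧ tableDist x v = tableDist u v - k

def HasOpenLayers (T : List (ℕ × ℕ)) : Prop :=
  ∀ u ∈ T, ∀ v ∈ T, ∀ k ∈ List.range (tableDist u v), 0 < k → ∃ x ∈ layer u v k, x ∉ T

instance : DecidablePred HasOpenLayers := fun T => by
  unfold HasOpenLayers; infer_instance

theorem IsMutualVisSet.hasOpenLayers {M : Set (ℕ × ℕ)} (hM : IsMutualVisSet 2 M)
    {T : List (ℕ × ℕ)} (hT : ∀ x ∈ T, x ∈ M) : HasOpenLayers T := by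
  intro u hu v hv k hk hk0
  have huL := verts_two_subset_vertexList (hM.1 (hT u hu))
  have hvL := verts_two_subset_vertexList (hM.1 (hT v hv))
  rw [List.mem_range, ← dist_graph_two huL hvL] at hk
  obtain ⟨x, hux, hxv, hxM⟩ := (hM.2 u (hT u hu) v (hT v hv)).exists_notMem_of_lt_dist hk0 hk
  have hxL := mem_vertexList_of_dist_ne_zero (u := u) (x := x) (by omega)
  refine ⟨x, List.mem_filter.2 ⟨hxL, ?_⟩, fun hxT => hxM (hT x hxT)⟩
  rw [← dist_graph_two huL hxL, ← dist_graph_two hxL hvL, ← dist_graph_two huL hvL]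
  simp [hux, hxv]

set_option maxRecDepth 100000 in
theorem not_hasOpenLayers_of_mem_sublistsLen :
    ∀ T ∈ vertexList.sublistsLen 7, ¬ HasOpenLayers T := by
  decide +kernel

/-- Every mutual-visibility set of `ST₃²` has at most 6 vertices, i.e. `μ(ST₃²) ≤ 6`. -/
theorem mu_two_le_six (M : Set (ℕ × ℕ)) (hM : IsMutualVisSet 2 M) : M.ncard ≤ 6 := by
  classical
  by_contra! h
  have hlen : 7 ≤ (vertexList.filter (· ∈ M)).length :=
    h.trans_le (ncard_le_length_filter (hM.1.trans verts_two_subset_vertexList))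
  have hT : (vertexList.filter (· ∈ M)).take 7 ∈ vertexList.sublistsLen 7 :=
    List.mem_sublistsLen.2
      ⟨(List.take_sublist _ _).trans List.filter_sublist, by simp only [List.length_take]; omega⟩
  refine not_hasOpenLayers_of_mem_sublistsLen _ hT (hM.hasOpenLayers fun x hx => ?_)
  exact of_decide_eq_true (List.mem_filter.1 (List.mem_of_mem_take hx)).2

end SierpinskiTriangle
end

section
/- Let n ≥ 2 and let H be a copy of ST_3^2 in ST_3^n with extreme vertices p_0,p_1,p_2 and proper vertices {u,v,w}. A set M ⊆ V(ST_3^n) is H-proper (for every x ∈ V(H) ∩ M and all i,j, x and p_i are M-visible and I(p_i,p_j) ∩ M = ∅) if and only if M ∩ V(H) ⊆ {u,v,w}. -/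
/-!
Every edge of `ST₃ⁿ` moves a vertex `(a, b)` by `±(1,0)`, `±(0,1)` or `±(1,-1)`, so each of
the potentials `a`, `b`, `a + b` (and their negatives) changes by at most one along an edge and
bounds distances from below. Each side of `H` is a walk of length 4 along which two of these
potentials grow at every step; a geodesic between its ends must do the same, which pins it to the
side. Hence the intervals between extreme vertices of `H` are its three sides, and the proper
vertices are the three inner vertices `u, v, w`. Conversely, each inner vertex reaches each extreme
vertex `p` along a geodesic that takes one step onto a side through `p` and then follows that side;
if `M` meets `H` only in inner vertices, the sides avoid `M` and these geodesics witness the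
visibility.
-/

namespace SierpinskiTriangle

instance inst_s11 (n : ℕ) : DecidablePred (Cell n) := fun _ => inferInstanceAs (Decidable (_ ∧ _))

lemma cell_translate {n m : ℕ} {o : ℕ × ℕ} (ho : IsCopy n m o) (a b : ℕ)
    (hc : Cell m (a, b) := by decide) : Cell n (o.1 + a, o.2 + b) := by
  obtain ⟨i, j, rfl, hij, hle⟩ := ho
  obtain ⟨hland, hlt⟩ := hc
  refine ⟨?_, by simp only; omega⟩
  simp only [Nat.land_eq] at hij hland ⊢
  apply Nat.eq_of_testBit_eq
  intro k
  have h1 := Nat.testBit_two_pow_mul_add i (show a < 2 ^ m by omega) k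
  have h2 := Nat.testBit_two_pow_mul_add j (show b < 2 ^ m by omega) k
  have e1 := congrArg (Nat.testBit · k) hland
  have e2 := congrArg (Nat.testBit · (k - m)) hij
  simp only [Nat.testBit_and, Nat.zero_testBit] at e1 e2 ⊢
  rw [mul_comm i, mul_comm j, h1, h2]
  split_ifs <;> assumption

section SimpleGraph

variable {V : Type*} {G : SimpleGraph V}

lemma interval_comm (u v : V) : interval G u v = interval G v u := by
  suffices h : ∀ u v : V, interval G u v ⊆ interval G v u from (h u v).antisymm (h v u)
  rintro u v x ⟨w, hw, hx⟩
  refine ⟨w.reverse, ?_, by simpa using hx⟩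
  rw [IsShortest, SimpleGraph.Walk.length_reverse, SimpleGraph.dist_comm]
  exact hw

lemma interval_self (u : V) : interval G u u = {u} := by
  ext x
  refine ⟨fun ⟨w, hw, hx⟩ => ?_, fun hx => ⟨.nil, by simp [IsShortest], by simpa using hx⟩⟩
  rw [IsShortest, SimpleGraph.dist_self, SimpleGraph.Walk.length_eq_zero_iff,
    SimpleGraph.Walk.nil_iff_support_eq] at hw
  simpa [hw] using hx

lemma exists_walk_of_adj_succ (f : ℕ → V) :
    ∀ k, (∀ i < k, G.Adj (f i) (f (i + 1))) →
      ∃ w : G.Walk (f 0) (f k), w.length = k ∧ ∀ i ≤ k, f i ∈ w.support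
  | 0, _ => ⟨.nil, rfl, fun i hi => by simp [Nat.le_zero.mp hi]⟩
  | k + 1, hadj => by
    obtain ⟨w, hlen, hsupp⟩ := exists_walk_of_adj_succ f k fun i hi => hadj i (by omega)
    refine ⟨w.concat (hadj k (by omega)), by simp [hlen], fun i hi => ?_⟩
    rw [SimpleGraph.Walk.support_concat, List.mem_append, List.mem_singleton]
    rcases Nat.lt_or_eq_of_le hi with hi | rfl
    exacts [Or.inl (hsupp i (by omega)), Or.inr rfl]

def IsOneLipschitz (G : SimpleGraph V) (φ : V → ℤ) : Prop :=
  ∀ ⦃a b⦄, G.Adj a b → φ b - φ a ≤ 1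

namespace IsOneLipschitz

variable {φ : V → ℤ} (hφ : IsOneLipschitz G φ)
include hφ

lemma sub_le_length {u v : V} (w : G.Walk u v) : φ v - φ u ≤ w.length := by
  induction w with
  | nil => simp
  | cons h _ ih => have := hφ h; push_cast [SimpleGraph.Walk.length_cons]; linarith

lemma sub_le_dist {u v : V} (h : G.Reachable u v) : φ v - φ u ≤ G.dist u v := by
  obtain ⟨w, hw⟩ := h.exists_walk_length_eq_dist
  exact hw ▸ hφ.sub_le_length w

lemma sub_eq_length_takeUntil [DecidableEq V] {u v z : V} (w : G.Walk u v)
    (hw : (w.length : ℤ) = φ v - φ u) (hz : z ∈ w.support) :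
    φ z - φ u = (w.takeUntil z hz).length := by
  have hsplit := congrArg SimpleGraph.Walk.length (w.take_spec hz)
  rw [SimpleGraph.Walk.length_append] at hsplit
  have h1 := hφ.sub_le_length (w.takeUntil z hz)
  have h2 := hφ.sub_le_length (w.dropUntil z hz)
  omega

/-- A geodesic from `u` to `v` is tight for both potentials, so at each of its vertices they have
grown by the same amount; `hf` says that this locates the vertex on `f`. -/
lemma interval_eq_image [DecidableEq V] {ψ : V → ℤ} (hψ : IsOneLipschitz G ψ) (f : ℕ → V)
    {k : ℕ} {u v : V} (hu : f 0 = u) (hv : f k = v) (hadj : ∀ i < k, G.Adj (f i) (f (i + 1)))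
    (hφk : φ v - φ u = k) (hψk : ψ v - ψ u = k)
    (hf : ∀ z, φ z - φ u = ψ z - ψ u → 0 ≤ φ z - φ u → φ z - φ u ≤ k → z ∈ f '' Set.Iic k) :
    G.dist u v = k ∧ interval G u v = f '' Set.Iic k := by
  subst hu hv
  obtain ⟨w, hlen, hsupp⟩ := exists_walk_of_adj_succ f k hadj
  have hdist : G.dist (f 0) (f k) = k := by
    have := hφ.sub_le_dist w.reachable
    have := SimpleGraph.dist_le w
    omega
  refine ⟨hdist, subset_antisymm ?_ ?_⟩
  · rintro z ⟨w', hw', hz⟩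
    rw [IsShortest, hdist] at hw'
    have h1 := hφ.sub_eq_length_takeUntil w' (by omega) hz
    have h2 := hψ.sub_eq_length_takeUntil w' (by omega) hz
    have := w'.length_takeUntil_le_length hz
    exact hf z (by omega) (by omega) (by omega)
  · rintro _ ⟨i, hi, rfl⟩
    exact ⟨w, hlen.trans hdist.symm, hsupp i hi⟩

lemma visible_of_adj_of_mem_interval [DecidableEq V] {M : Set V} {x y p q : V}
    (hpq : (G.dist p q : ℤ) = φ q - φ p) (hy : y ∈ interval G p q) (hxy : G.Adj x y)
    (hx : φ x = φ y + 1) (hM : interval G p q ∩ M = ∅) : Visible G M x p := by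
  obtain ⟨w, hw, hyw⟩ := hy
  rw [IsShortest] at hw
  have ht := hφ.sub_eq_length_takeUntil w (hw ▸ hpq) hyw
  set t := w.takeUntil y hyw
  refine ⟨.cons hxy t.reverse, ?_, fun z hz hzM => ?_⟩
  · have hlow := hφ.sub_le_dist (t.concat hxy.symm).reachable
    have hup := SimpleGraph.dist_le (.cons hxy t.reverse)
    rw [SimpleGraph.dist_comm] at hlow
    rw [IsShortest]
    simp only [SimpleGraph.Walk.length_cons, SimpleGraph.Walk.length_reverse] at hup ⊢
    omega
  · rw [SimpleGraph.Walk.support_cons, SimpleGraph.Walk.support_reverse, List.mem_cons,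
      List.mem_reverse] at hz
    refine hz.imp id fun hzt => ?_
    have hzI : z ∈ interval G p q := ⟨w, hw, w.support_takeUntil_subset_support hyw hzt⟩
    exact (hM.subset ⟨hzI, hzM⟩).elim

end IsOneLipschitz

end SimpleGraph

section Graph

variable {n : ℕ} {c u v : ℕ × ℕ}

lemma adj_right (hc : Cell n c) : (graph n).Adj c (c.1 + 1, c.2) :=
  ⟨by simp [Prod.ext_iff], c, hc, by simp [cellCorners]⟩

lemma adj_up (hc : Cell n c) : (graph n).Adj c (c.1, c.2 + 1) :=
  ⟨by simp [Prod.ext_iff], c, hc, by simp [cellCorners]⟩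

lemma adj_diag (hc : Cell n c) : (graph n).Adj (c.1 + 1, c.2) (c.1, c.2 + 1) :=
  ⟨by simp [Prod.ext_iff], c, hc, by simp [cellCorners]⟩

lemma adj_cases (h : (graph n).Adj u v) :
    (v.1 = u.1 + 1 ∧ v.2 = u.2) ∨ (u.1 = v.1 + 1 ∧ u.2 = v.2) ∨
    (v.1 = u.1 ∧ v.2 = u.2 + 1) ∨ (u.1 = v.1 ∧ u.2 = v.2 + 1) ∨
    (v.1 + 1 = u.1 ∧ v.2 = u.2 + 1) ∨ (u.1 + 1 = v.1 ∧ u.2 = v.2 + 1) := by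
  obtain ⟨hne, c, -, hu, hv⟩ := h
  rw [Ne, Prod.ext_iff] at hne
  simp only [cellCorners, Set.mem_insert_iff, Set.mem_singleton_iff, Prod.ext_iff] at hu hv
  omega

lemma isOneLipschitz_linear {a b : ℤ} (ha : |a| ≤ 1 := by norm_num)
    (hb : |b| ≤ 1 := by norm_num) (hab : |a - b| ≤ 1 := by norm_num) :
    IsOneLipschitz (graph n) (fun z => a * z.1 + b * z.2) := by
  rintro ⟨u₁, u₂⟩ ⟨v₁, v₂⟩ h
  rw [abs_le] at ha hb hab
  have hstep := adj_cases h
  simp only at hstep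
  rcases hstep with ⟨rfl, rfl⟩ | ⟨rfl, rfl⟩ | ⟨rfl, rfl⟩ | ⟨rfl, rfl⟩ | ⟨rfl, rfl⟩ |
    ⟨rfl, rfl⟩ <;>
  · push_cast; linarith

end Graph

lemma mem_verts_two {a b : ℕ} : (a, b) ∈ verts 2 ↔ a + b ≤ 4 := by
  constructor
  · rintro ⟨c, ⟨-, hc⟩, hm⟩
    simp only [cellCorners, Set.mem_insert_iff, Set.mem_singleton_iff, Prod.ext_iff] at hm
    norm_num at hc
    omega
  · intro h
    have ha : a ≤ 4 := by omega
    have hb : b ≤ 4 := by omega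
    have hcell :
        Cell 2 (a, b) ∨ (0 < a ∧ Cell 2 (a - 1, b)) ∨ (0 < b ∧ Cell 2 (a, b - 1)) := by
      revert h
      interval_cases a <;> interval_cases b <;> decide
    rcases hcell with hc | ⟨ha₀, hc⟩ | ⟨hb₀, hc⟩
    · exact ⟨_, hc, by simp [cellCorners]⟩
    · exact ⟨_, hc, by simp [cellCorners]; omega⟩
    · exact ⟨_, hc, by simp [cellCorners]; omega⟩

lemma mem_copyVerts_two {o z : ℕ × ℕ} :
    z ∈ copyVerts 2 o ↔ o.1 ≤ z.1 ∧ o.2 ≤ z.2 ∧ z.1 + z.2 ≤ o.1 + o.2 + 4 := by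
  constructor
  · rintro ⟨⟨a, b⟩, h, rfl⟩
    have := mem_verts_two.mp h
    dsimp only
    omega
  · intro h
    exact ⟨(z.1 - o.1, z.2 - o.2), mem_verts_two.mpr (by omega),
      Prod.ext (by dsimp only; omega) (by dsimp only; omega)⟩

lemma copyExtreme_two (o : ℕ × ℕ) :
    copyExtreme 2 o = {(o.1, o.2), (o.1 + 4, o.2), (o.1, o.2 + 4)} :=
  rfl

/-- `properVerts n o` is `copyVerts 2 o \ boundary n o` by definition. -/
def boundary (n : ℕ) (o : ℕ × ℕ) : Set (ℕ × ℕ) :=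
  interval (graph n) (o.1, o.2) (o.1 + 4, o.2) ∪
    interval (graph n) (o.1, o.2) (o.1, o.2 + 4) ∪
    interval (graph n) (o.1 + 4, o.2) (o.1, o.2 + 4)

def innerVerts (o : ℕ × ℕ) : Set (ℕ × ℕ) :=
  {(o.1 + 1, o.2 + 1), (o.1 + 2, o.2 + 1), (o.1 + 1, o.2 + 2)}

section Copy

variable {n : ℕ} {o : ℕ × ℕ} (ho : IsCopy n 2 o)
include ho

lemma bottom_side :
    (graph n).dist (o.1, o.2) (o.1 + 4, o.2) = 4 ∧
      interval (graph n) (o.1, o.2) (o.1 + 4, o.2) =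
        (fun i => (o.1 + i, o.2)) '' Set.Iic 4 := by
  refine (isOneLipschitz_linear (a := 1) (b := 0)).interval_eq_image
    (isOneLipschitz_linear (a := 1) (b := 1)) _ rfl rfl
    (fun i hi => adj_right (cell_translate ho i 0 ⟨by simp, by simp; omega⟩))
    (by push_cast; ring) (by push_cast; ring) fun z h₁ h₂ h₃ => ?_
  push_cast at h₁ h₂ h₃
  exact ⟨z.1 - o.1, by rw [Set.mem_Iic]; omega,
    Prod.ext (by dsimp only; omega) (by dsimp only; omega)⟩

lemma left_side :
    (graph n).dist (o.1, o.2) (o.1, o.2 + 4) = 4 ∧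
      interval (graph n) (o.1, o.2) (o.1, o.2 + 4) =
        (fun i => (o.1, o.2 + i)) '' Set.Iic 4 := by
  refine (isOneLipschitz_linear (a := 0) (b := 1)).interval_eq_image
    (isOneLipschitz_linear (a := 1) (b := 1)) _ rfl rfl
    (fun i hi => adj_up (cell_translate ho 0 i ⟨by simp, by simp; omega⟩))
    (by push_cast; ring) (by push_cast; ring) fun z h₁ h₂ h₃ => ?_
  push_cast at h₁ h₂ h₃
  exact ⟨z.2 - o.2, by rw [Set.mem_Iic]; omega,
    Prod.ext (by dsimp only; omega) (by dsimp only; omega)⟩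

lemma right_side :
    (graph n).dist (o.1 + 4, o.2) (o.1, o.2 + 4) = 4 ∧
      interval (graph n) (o.1 + 4, o.2) (o.1, o.2 + 4) =
        (fun i => (o.1 + (4 - i), o.2 + i)) '' Set.Iic 4 := by
  refine (isOneLipschitz_linear (a := 0) (b := 1)).interval_eq_image
    (isOneLipschitz_linear (a := -1) (b := 0)) _ rfl rfl
    (fun i hi => ?_) (by push_cast; ring) (by push_cast; ring) fun z h₁ h₂ h₃ => ?_
  · convert adj_diag (cell_translate ho (3 - i) i (by interval_cases i <;> decide)) using 2 <;>
      dsimp only <;> omega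
  · push_cast at h₁ h₂ h₃
    exact ⟨z.2 - o.2, by rw [Set.mem_Iic]; omega,
      Prod.ext (by dsimp only; omega) (by dsimp only; omega)⟩

lemma boundary_subset_copyVerts : boundary n o ⊆ copyVerts 2 o := by
  rw [boundary, (bottom_side ho).2, (left_side ho).2, (right_side ho).2]
  rintro z ((⟨i, hi, rfl⟩ | ⟨i, hi, rfl⟩) | ⟨i, hi, rfl⟩) <;>
    rw [Set.mem_Iic] at hi <;> rw [mem_copyVerts_two] <;> dsimp only <;> omega

lemma interval_subset_boundary {p q : ℕ × ℕ} (hp : p ∈ copyExtreme 2 o)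
    (hq : q ∈ copyExtreme 2 o) : interval (graph n) p q ⊆ boundary n o := by
  have h₀ : (o.1, o.2) ∈ boundary n o :=
    Or.inl (Or.inl ((bottom_side ho).2 ▸ ⟨0, by simp, rfl⟩))
  have h₁ : (o.1 + 4, o.2) ∈ boundary n o := Or.inr ((right_side ho).2 ▸ ⟨0, by simp, rfl⟩)
  have h₂ : (o.1, o.2 + 4) ∈ boundary n o := Or.inr ((right_side ho).2 ▸ ⟨4, by simp, rfl⟩)
  rw [copyExtreme_two] at hp hq
  simp only [Set.mem_insert_iff, Set.mem_singleton_iff] at hp hq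
  rcases hp with rfl | rfl | rfl <;> rcases hq with rfl | rfl | rfl <;>
    first
      | rw [interval_self, Set.singleton_subset_iff]; assumption
      | intro z hz; simp only [boundary, interval_comm, Set.mem_union] at hz ⊢; tauto

lemma properVerts_subset : properVerts n o ⊆ innerVerts o := by
  rintro z ⟨hz, hzB⟩
  rw [mem_copyVerts_two] at hz
  by_contra hne
  simp only [innerVerts, Set.mem_insert_iff, Set.mem_singleton_iff, Prod.ext_iff, not_or] at hne
  apply hzB
  rw [(bottom_side ho).2, (left_side ho).2, (right_side ho).2]
  rcases (by omega : z.2 = o.2 ∨ z.1 = o.1 ∨ z.1 + z.2 = o.1 + o.2 + 4) with h | h | h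
  · exact Or.inl (Or.inl ⟨z.1 - o.1, by rw [Set.mem_Iic]; omega,
      Prod.ext (by dsimp only; omega) h.symm⟩)
  · exact Or.inl (Or.inr ⟨z.2 - o.2, by rw [Set.mem_Iic]; omega,
      Prod.ext h.symm (by dsimp only; omega)⟩)
  · exact Or.inr ⟨z.2 - o.2, by rw [Set.mem_Iic]; omega,
      Prod.ext (by dsimp only; omega) (by dsimp only; omega)⟩

variable {M : Set (ℕ × ℕ)} {x : ℕ × ℕ} (hx : x ∈ innerVerts o)
include hx

lemma visible_bottom_left (hB : interval (graph n) (o.1, o.2) (o.1 + 4, o.2) ∩ M = ∅)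
    (hL : interval (graph n) (o.1, o.2) (o.1, o.2 + 4) ∩ M = ∅) :
    Visible (graph n) M x (o.1, o.2) := by
  obtain ⟨dB, iB⟩ := bottom_side ho
  obtain ⟨dL, iL⟩ := left_side ho
  have hφ := isOneLipschitz_linear (n := n) (a := 1) (b := 1)
  rcases hx with rfl | rfl | rfl
  · exact hφ.visible_of_adj_of_mem_interval (by rw [dB]; push_cast; ring)
      (by rw [iB]; exact ⟨1, by simp, rfl⟩) (adj_up (cell_translate ho 1 0)).symm
      (by push_cast; ring) hB
  · exact hφ.visible_of_adj_of_mem_interval (by rw [dB]; push_cast; ring)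
      (by rw [iB]; exact ⟨2, by simp, rfl⟩) (adj_up (cell_translate ho 2 0)).symm
      (by push_cast; ring) hB
  · exact hφ.visible_of_adj_of_mem_interval (by rw [dL]; push_cast; ring)
      (by rw [iL]; exact ⟨2, by simp, rfl⟩) (adj_right (cell_translate ho 0 2)).symm
      (by push_cast; ring) hL

lemma visible_bottom_right (hB : interval (graph n) (o.1 + 4, o.2) (o.1, o.2) ∩ M = ∅)
    (hR : interval (graph n) (o.1 + 4, o.2) (o.1, o.2 + 4) ∩ M = ∅) :
    Visible (graph n) M x (o.1 + 4, o.2) := by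
  obtain ⟨dB, iB⟩ := bottom_side ho
  obtain ⟨dR, iR⟩ := right_side ho
  have hφ := isOneLipschitz_linear (n := n) (a := -1) (b := 0)
  rcases hx with rfl | rfl | rfl
  · exact hφ.visible_of_adj_of_mem_interval
      (by rw [SimpleGraph.dist_comm, dB]; push_cast; ring)
      (by rw [interval_comm, iB]; exact ⟨2, by simp, rfl⟩) (adj_diag (cell_translate ho 1 0)).symm
      (by push_cast; ring) hB
  · exact hφ.visible_of_adj_of_mem_interval
      (by rw [SimpleGraph.dist_comm, dB]; push_cast; ring)
      (by rw [interval_comm, iB]; exact ⟨3, by simp, rfl⟩) (adj_diag (cell_translate ho 2 0)).symm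
      (by push_cast; ring) hB
  · exact hφ.visible_of_adj_of_mem_interval (by rw [dR]; push_cast; ring)
      (by rw [iR]; exact ⟨2, by simp, rfl⟩) (adj_right (cell_translate ho 1 2))
      (by push_cast; ring) hR

lemma visible_top (hL : interval (graph n) (o.1, o.2 + 4) (o.1, o.2) ∩ M = ∅)
    (hR : interval (graph n) (o.1, o.2 + 4) (o.1 + 4, o.2) ∩ M = ∅) :
    Visible (graph n) M x (o.1, o.2 + 4) := by
  obtain ⟨dL, iL⟩ := left_side ho
  obtain ⟨dR, iR⟩ := right_side ho
  have hφ := isOneLipschitz_linear (n := n) (a := 0) (b := -1)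
  rcases hx with rfl | rfl | rfl
  · exact hφ.visible_of_adj_of_mem_interval
      (by rw [SimpleGraph.dist_comm, dL]; push_cast; ring)
      (by rw [interval_comm, iL]; exact ⟨2, by simp, rfl⟩) (adj_diag (cell_translate ho 0 1))
      (by push_cast; ring) hL
  · exact hφ.visible_of_adj_of_mem_interval
      (by rw [SimpleGraph.dist_comm, dR]; push_cast; ring)
      (by rw [interval_comm, iR]; exact ⟨2, by simp, rfl⟩) (adj_up (cell_translate ho 2 1))
      (by push_cast; ring) hR
  · exact hφ.visible_of_adj_of_mem_interval
      (by rw [SimpleGraph.dist_comm, dL]; push_cast; ring)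
      (by rw [interval_comm, iL]; exact ⟨3, by simp, rfl⟩) (adj_diag (cell_translate ho 0 2))
      (by push_cast; ring) hL

lemma visible_copyExtreme {p : ℕ × ℕ} (hp : p ∈ copyExtreme 2 o)
    (hM : ∀ p ∈ copyExtreme 2 o, ∀ q ∈ copyExtreme 2 o, interval (graph n) p q ∩ M = ∅) :
    Visible (graph n) M x p := by
  have e₀ : (o.1, o.2) ∈ copyExtreme 2 o := Or.inl rfl
  have e₁ : (o.1 + 4, o.2) ∈ copyExtreme 2 o := Or.inr (Or.inl rfl)
  have e₂ : (o.1, o.2 + 4) ∈ copyExtreme 2 o := Or.inr (Or.inr rfl)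
  rcases hp with rfl | rfl | rfl
  exacts [visible_bottom_left ho hx (hM _ e₀ _ e₁) (hM _ e₀ _ e₂),
    visible_bottom_right ho hx (hM _ e₁ _ e₀) (hM _ e₁ _ e₂),
    visible_top ho hx (hM _ e₂ _ e₀) (hM _ e₂ _ e₁)]

end Copy

theorem H_proper_iff_general (n : ℕ) (o : ℕ × ℕ) (ho : IsCopy n 2 o)
    (M : Set (ℕ × ℕ)) :
    ((∀ x ∈ M ∩ copyVerts 2 o, ∀ p ∈ copyExtreme 2 o, Visible (graph n) M x p) ∧
      ∀ p ∈ copyExtreme 2 o, ∀ q ∈ copyExtreme 2 o, interval (graph n) p q ∩ M = ∅) ↔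
    M ∩ copyVerts 2 o ⊆ properVerts n o := by
  have e₀ : (o.1, o.2) ∈ copyExtreme 2 o := Or.inl rfl
  have e₁ : (o.1 + 4, o.2) ∈ copyExtreme 2 o := Or.inr (Or.inl rfl)
  have e₂ : (o.1, o.2 + 4) ∈ copyExtreme 2 o := Or.inr (Or.inr rfl)
  constructor
  · rintro ⟨-, hI⟩ x ⟨hxM, hxV⟩
    have hx : ∀ p ∈ copyExtreme 2 o, ∀ q ∈ copyExtreme 2 o, x ∉ interval (graph n) p q :=
      fun p hp q hq hx => (hI p hp q hq).subset ⟨hx, hxM⟩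
    refine ⟨hxV, ?_⟩
    rintro ((h | h) | h)
    exacts [hx _ e₀ _ e₁ h, hx _ e₀ _ e₂ h, hx _ e₁ _ e₂ h]
  · intro h
    have hI : ∀ p ∈ copyExtreme 2 o, ∀ q ∈ copyExtreme 2 o, interval (graph n) p q ∩ M = ∅ :=
      fun p hp q hq => Set.eq_empty_of_forall_notMem fun z ⟨hz, hzM⟩ =>
        have hzB := interval_subset_boundary ho hp hq hz
        (h ⟨hzM, boundary_subset_copyVerts ho hzB⟩).2 hzB
    exact ⟨fun x hx p hp => visible_copyExtreme ho (properVerts_subset ho (h hx)) hp hI, hI⟩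

/-- Let `n ≥ 2` and `H` a copy of `ST₃²` in `ST₃ⁿ`. A set `M ⊆ V(ST₃ⁿ)` is `H`-proper
(every `x ∈ V(H) ∩ M` is `M`-visible from every extreme vertex of `H`, and no interval
between extreme vertices of `H` meets `M`) iff `M ∩ V(H)` consists of proper vertices. -/
theorem H_proper_iff (n : ℕ) (hn : 2 ≤ n) (o : ℕ × ℕ) (ho : IsCopy n 2 o)
    (M : Set (ℕ × ℕ)) (hM : M ⊆ verts n) :
    ((∀ x ∈ M ∩ copyVerts 2 o, ∀ p ∈ copyExtreme 2 o, Visible (graph n) M x p) ∧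
      ∀ p ∈ copyExtreme 2 o, ∀ q ∈ copyExtreme 2 o, interval (graph n) p q ∩ M = ∅) ↔
    M ∩ copyVerts 2 o ⊆ properVerts n o :=
  H_proper_iff_general n o ho M

end SierpinskiTriangle
end
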